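/- arXiv:1607.02330 — 2 statements merged into one kernel-verified Lean document; each statement's English description precedes it below -/
import Mathlib

section
/- If the pairs (X_1,Y_1) and (X_2,Y_2) are independent (P_{X1X2Y1Y2} = P_{X1Y1} ⊗ P_{X2Y2}), then for all α > 0, J_α(X_1,X_2;Y_1,Y_2) = J_α(X_1;Y_1) + J_α(X_2;Y_2). -/
open scoped ENNReal BigOperators
open Finset

/-- Kullback-Leibler divergence between two PMFs on a finite set, valued in `EReal`
(`⊤` when `P` is not absolutely continuous w.r.t. `Q`). -/
noncomputable def klDiv {X : Type*} [Fintype X] (P Q : X → ℝ≥0∞) : EReal :=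
  if ∀ x, Q x = 0 → P x = 0 then
    (((∑ x, (P x).toReal * Real.log ((P x).toReal / (Q x).toReal)) : ℝ) : EReal)
  else ⊤

/-- Rényi divergence of order `α` (KL divergence at `α = 1`).  The ENNReal conventions
`0 * ⊤ = 0` and `0 ^ y = ⊤` for `y < 0` encode `0/0 = 0` and `p/0 = ∞`. -/
noncomputable def renyiDiv {X : Type*} [Fintype X] (α : ℝ) (P Q : X → ℝ≥0∞) : EReal :=
  if α = 1 then klDiv P Q
  else (((α - 1)⁻¹ : ℝ) : EReal) * ENNReal.log (∑ x, P x ^ α * Q x ^ (1 - α))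

/-- Relative α-entropy (Sundaresan's divergence); KL divergence at `α = 1`. -/
noncomputable def relAlphaEnt {X : Type*} [Fintype X] (α : ℝ) (P Q : X → ℝ≥0∞) : EReal :=
  if α = 1 then klDiv P Q
  else ((α / (1 - α) : ℝ) : EReal) * ENNReal.log (∑ x, P x * Q x ^ (α - 1))
    + ENNReal.log (∑ x, Q x ^ α)
    - (((1 - α)⁻¹ : ℝ) : EReal) * ENNReal.log (∑ x, P x ^ α)

/-- The set of PMFs on a finite type, as a subtype. -/
def PMFon (X : Type*) [Fintype X] : Type _ := {p : X → ℝ≥0∞ // ∑ x, p x = 1}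

noncomputable def margX {X Y : Type*} [Fintype X] [Fintype Y] (P : X × Y → ℝ≥0∞) : X → ℝ≥0∞ :=
  fun x => ∑ y, P (x, y)

noncomputable def margY {X Y : Type*} [Fintype X] [Fintype Y] (P : X × Y → ℝ≥0∞) : Y → ℝ≥0∞ :=
  fun y => ∑ x, P (x, y)

/-- Mutual information of a joint PMF. -/
noncomputable def mutualInfo {X Y : Type*} [Fintype X] [Fintype Y] (P : X × Y → ℝ≥0∞) : EReal :=
  klDiv P (fun p => margX P p.1 * margY P p.2)

/-- The dependence measure `J_α`. -/
noncomputable def Jalpha {X Y : Type*} [Fintype X] [Fintype Y] (α : ℝ) (P : X × Y → ℝ≥0∞) :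
    EReal :=
  ⨅ (Q : PMFon X × PMFon Y), renyiDiv α P (fun p => Q.1.1 p.1 * Q.2.1 p.2)

/-- The dependence measure `K_α`. -/
noncomputable def Kalpha {X Y : Type*} [Fintype X] [Fintype Y] (α : ℝ) (P : X × Y → ℝ≥0∞) :
    EReal :=
  ⨅ (Q : PMFon X × PMFon Y), relAlphaEnt α P (fun p => Q.1.1 p.1 * Q.2.1 p.2)

/-- Rényi entropy of order `β`. -/
noncomputable def renyiEnt {X : Type*} [Fintype X] (β : ℝ) (P : X → ℝ≥0∞) : EReal :=
  if β = 1 then (((∑ x, (P x).toReal * Real.log (P x).toReal⁻¹ : ℝ)) : EReal)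
  else (((1 - β)⁻¹ : ℝ) : EReal) * ENNReal.log (∑ x, P x ^ β)

/-- Min-entropy. -/
noncomputable def minEnt {X : Type*} [Fintype X] (P : X → ℝ≥0∞) : EReal :=
  - ENNReal.log (⨆ x, P x)

/-!
Upper bound: against product reference laws `Q₁ ⊗ Q₂` both the Hellinger sum
`∑ P ^ α * Q ^ (1 - α)` and the KL sum of `P₁ ⊗ P₂` split, so `D_α` is additive and `J_α` of the
pair is at most `J_α(P₁) + J_α(P₂)`. Passing the infimum through the sum in `EReal` needs both
terms `< ⊤`, which the product of the marginals of `Pᵢ` witnesses.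

Lower bound: a reference law `Q_{X₁X₂} ⊗ Q_{Y₁Y₂}` factors through `a = (x₁, y₁)` into the
marginals of `x₁, y₁` times the conditional laws of `x₂, y₂` given them. Along this factorization
the Hellinger (resp. KL) sum of the pair is a `P₁`-mixture over `a` of those of `P₂` against the
conditional laws, and the mixture is bounded, on the side that the sign of `α - 1` calls for, by a
single term. Hence `D_α ≥ D_α(P₁ ‖ marginals) + D_α(P₂ ‖ conditionals at a) ≥ J_α(P₁) + J_α(P₂)`.
-/

namespace EReal

-- Only an inequality: for `c < 0` and `{x, y} = {⊥, ⊤}` the left side is `⊥ + ⊤ = ⊥`.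
theorem coe_mul_add_le (c : ℝ) (x y : EReal) : (c : EReal) * x + c * y ≤ c * (x + y) := by
  rcases le_or_gt 0 c with hc | hc
  · exact (left_distrib_of_nonneg_of_ne_top (EReal.coe_nonneg.mpr hc) (coe_ne_top c) x y).ge
  induction x <;> induction y <;>
    simp [coe_mul_top_of_neg hc, coe_mul_bot_of_neg hc, ← coe_add, ← coe_mul, mul_add]

theorem coe_mul_add_of_ne_top (c : ℝ) {x y : EReal} (hx : x ≠ ⊤) (hy : y ≠ ⊤) :
    (c : EReal) * (x + y) = c * x + c * y := by
  rcases le_or_gt 0 c with hc | hc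
  · exact left_distrib_of_nonneg_of_ne_top (EReal.coe_nonneg.mpr hc) (coe_ne_top c) x y
  induction x <;> induction y <;>
    simp_all [coe_mul_bot_of_neg hc, ← coe_add, ← coe_mul, mul_add]

theorem le_iInf_add_iInf {ι κ : Sort*} {a : EReal} {f : ι → EReal} {g : κ → EReal}
    (hf : ⨅ i, f i ≠ ⊤) (hg : ⨅ j, g j ≠ ⊤) (h : ∀ i j, a ≤ f i + g j) :
    a ≤ (⨅ i, f i) + ⨅ j, g j :=
  le_add_of_forall_gt (.inr hg) (.inl hf) fun _ hx _ hy => by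
    obtain ⟨i, hi⟩ := iInf_lt_iff.mp hx
    obtain ⟨j, hj⟩ := iInf_lt_iff.mp hy
    exact (h i j).trans (add_le_add hi.le hj.le)

end EReal

theorem exists_ne_zero_le_sum_mul {ι : Type*} [Fintype ι] {w : ι → ℝ} (hw : ∀ i, 0 ≤ w i)
    (hw1 : ∑ i, w i = 1) (f : ι → ℝ) : ∃ i, w i ≠ 0 ∧ f i ≤ ∑ j, w j * f j := by
  by_contra! h
  obtain ⟨i, -, hi⟩ := exists_ne_zero_of_sum_ne_zero (hw1 ▸ one_ne_zero : ∑ j, w j ≠ 0)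
  have hlt : ∑ j, w j * ∑ k, w k * f k < ∑ j, w j * f j := by
    refine sum_lt_sum (fun j _ => ?_) ⟨i, mem_univ i, ?_⟩
    · rcases eq_or_ne (w j) 0 with hj | hj
      · simp [hj]
      · exact mul_le_mul_of_nonneg_left (h j hj).le (hw j)
    · exact mul_lt_mul_of_pos_left (h i hi) ((hw i).lt_of_ne' hi)
  rw [← sum_mul, hw1, one_mul] at hlt
  exact hlt.false

section Pmf

variable {A B : Type*} [Fintype A] [Fintype B]

theorem ne_top_of_sum_eq_one {P : A → ℝ≥0∞} (hP : ∑ x, P x = 1) (x : A) : P x ≠ ⊤ :=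
  ne_top_of_le_ne_top ENNReal.one_ne_top (hP ▸ single_le_sum (fun _ _ => zero_le) (mem_univ x))

theorem exists_ne_zero_of_sum_eq_one {P : A → ℝ≥0∞} (hP : ∑ x, P x = 1) : ∃ x, P x ≠ 0 := by
  obtain ⟨x, -, hx⟩ := exists_ne_zero_of_sum_ne_zero (hP ▸ one_ne_zero : ∑ x, P x ≠ 0)
  exact ⟨x, hx⟩

theorem sum_toReal_of_sum_eq_one {P : A → ℝ≥0∞} (hP : ∑ x, P x = 1) : ∑ x, (P x).toReal = 1 := by
  rw [← ENNReal.toReal_sum fun x _ => ne_top_of_sum_eq_one hP x, hP, ENNReal.toReal_one]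

theorem sum_margX (Q : A × B → ℝ≥0∞) : ∑ a, margX Q a = ∑ p, Q p :=
  (Fintype.sum_prod_type Q).symm

theorem sum_margY (Q : A × B → ℝ≥0∞) : ∑ b, margY Q b = ∑ p, Q p :=
  (Fintype.sum_prod_type_right Q).symm

theorem le_margX (Q : A × B → ℝ≥0∞) (p : A × B) : Q p ≤ margX Q p.1 :=
  single_le_sum (f := fun b => Q (p.1, b)) (fun _ _ => zero_le) (mem_univ p.2)

theorem le_margY (Q : A × B → ℝ≥0∞) (p : A × B) : Q p ≤ margY Q p.2 :=
  single_le_sum (f := fun a => Q (a, p.2)) (fun _ _ => zero_le) (mem_univ p.1)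

theorem eq_zero_of_margX_mul_margY_eq_zero {Q : A × B → ℝ≥0∞} {p : A × B}
    (h : margX Q p.1 * margY Q p.2 = 0) : Q p = 0 := by
  rcases mul_eq_zero.mp h with h | h
  · exact le_zero_iff.mp (h ▸ le_margX Q p)
  · exact le_zero_iff.mp (h ▸ le_margY Q p)

theorem sum_mul_eq_one {Q₁ : A → ℝ≥0∞} {Q₂ : B → ℝ≥0∞} (h₁ : ∑ a, Q₁ a = 1)
    (h₂ : ∑ b, Q₂ b = 1) : ∑ p : A × B, Q₁ p.1 * Q₂ p.2 = 1 := by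
  rw [Fintype.sum_prod_type, ← Fintype.sum_mul_sum, h₁, h₂, one_mul]

-- On a null row this defaults to `margY Q`, so that every row is a PMF.
noncomputable def condFst (Q : A × B → ℝ≥0∞) (a : A) : B → ℝ≥0∞ :=
  fun b => if margX Q a = 0 then margY Q b else Q (a, b) / margX Q a

theorem margX_mul_condFst {Q : A × B → ℝ≥0∞} (hQ : ∑ p, Q p = 1) (a : A) (b : B) :
    margX Q a * condFst Q a b = Q (a, b) := by
  by_cases h : margX Q a = 0
  · rw [h, zero_mul]
    exact (le_zero_iff.mp (h ▸ le_margX Q (a, b))).symm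
  · rw [condFst, if_neg h,
      ENNReal.mul_div_cancel h (ne_top_of_sum_eq_one ((sum_margX Q).trans hQ) a)]

theorem sum_condFst {Q : A × B → ℝ≥0∞} (hQ : ∑ p, Q p = 1) (a : A) :
    ∑ b, condFst Q a b = 1 := by
  by_cases h : margX Q a = 0
  · simp only [condFst, if_pos h]
    rw [sum_margY, hQ]
  · simp only [condFst, if_neg h, ENNReal.div_eq_inv_mul, ← mul_sum]
    exact ENNReal.inv_mul_cancel h (ne_top_of_sum_eq_one ((sum_margX Q).trans hQ) a)

end Pmf

section Divergence

variable {T : Type*} [Fintype T]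

theorem renyiDiv_comp_equiv {T' : Type*} [Fintype T'] (α : ℝ) (e : T ≃ T') (P Q : T' → ℝ≥0∞) :
    renyiDiv α (P ∘ e) (Q ∘ e) = renyiDiv α P Q := by
  simp only [renyiDiv, klDiv, Function.comp_apply,
    e.forall_congr_right (q := fun x => Q x = 0 → P x = 0),
    e.sum_comp (fun x => P x ^ α * Q x ^ (1 - α)),
    e.sum_comp (fun x => (P x).toReal * Real.log ((P x).toReal / (Q x).toReal))]

theorem renyiDiv_one (P Q : T → ℝ≥0∞) : renyiDiv 1 P Q = klDiv P Q := if_pos rfl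

noncomputable def hellingerSum (α : ℝ) (P Q : T → ℝ≥0∞) : ℝ≥0∞ :=
  ∑ x, P x ^ α * Q x ^ (1 - α)

theorem renyiDiv_of_ne_one {α : ℝ} (hα : α ≠ 1) (P Q : T → ℝ≥0∞) :
    renyiDiv α P Q = ((α - 1)⁻¹ : ℝ) * ENNReal.log (hellingerSum α P Q) :=
  if_neg hα

theorem hellingerSum_ne_top {α : ℝ} (hα₀ : 0 ≤ α) (hα₁ : α ≤ 1) {P Q : T → ℝ≥0∞}
    (hP : ∀ x, P x ≠ ⊤) (hQ : ∀ x, Q x ≠ ⊤) : hellingerSum α P Q ≠ ⊤ :=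
  ENNReal.sum_ne_top.mpr fun x _ => ENNReal.mul_ne_top (ENNReal.rpow_ne_top_of_nonneg hα₀ (hP x))
    (ENNReal.rpow_ne_top_of_nonneg (sub_nonneg.mpr hα₁) (hQ x))

noncomputable def klTerm (p q : ℝ≥0∞) : ℝ := p.toReal * Real.log (p.toReal / q.toReal)

theorem klDiv_of_ac {P Q : T → ℝ≥0∞} (h : ∀ x, Q x = 0 → P x = 0) :
    klDiv P Q = ((∑ x, klTerm (P x) (Q x) : ℝ) : EReal) :=
  if_pos h

theorem klDiv_of_not_ac {P Q : T → ℝ≥0∞} (h : ¬ ∀ x, Q x = 0 → P x = 0) : klDiv P Q = ⊤ :=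
  if_neg h

theorem klDiv_ne_bot (P Q : T → ℝ≥0∞) : klDiv P Q ≠ ⊥ := by
  unfold klDiv
  split_ifs <;> simp

end Divergence

theorem Real.mul_mul_log_div_mul {x₁ x₂ y₁ y₂ : ℝ} (h : x₁ * x₂ ≠ 0 → y₁ * y₂ ≠ 0) :
    x₁ * x₂ * Real.log (x₁ * x₂ / (y₁ * y₂)) =
      x₂ * (x₁ * Real.log (x₁ / y₁)) + x₁ * (x₂ * Real.log (x₂ / y₂)) := by
  rcases eq_or_ne x₁ 0 with rfl | hx₁
  · simp
  rcases eq_or_ne x₂ 0 with rfl | hx₂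
  · simp
  obtain ⟨hy₁, hy₂⟩ := mul_ne_zero_iff.mp (h (mul_ne_zero hx₁ hx₂))
  rw [mul_div_mul_comm, Real.log_mul (div_ne_zero hx₁ hy₁) (div_ne_zero hx₂ hy₂)]
  ring

theorem klTerm_mul {p₁ p₂ q₁ q₂ : ℝ≥0∞} (hq : q₁ * q₂ ≠ ⊤) (h : p₁ * p₂ ≠ 0 → q₁ * q₂ ≠ 0) :
    klTerm (p₁ * p₂) (q₁ * q₂) = p₂.toReal * klTerm p₁ q₁ + p₁.toReal * klTerm p₂ q₂ := by
  simp only [klTerm, ENNReal.toReal_mul]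
  refine Real.mul_mul_log_div_mul fun hp => ?_
  rw [← ENNReal.toReal_mul] at hp ⊢
  exact ENNReal.toReal_ne_zero.mpr ⟨h (ENNReal.toReal_ne_zero.mp hp).1, hq⟩

section ChainRule

variable {A B : Type*} [Fintype A] [Fintype B] {P₁ M : A → ℝ≥0∞} {P₂ : B → ℝ≥0∞}
  {C : A → B → ℝ≥0∞}

theorem hellingerSum_mul (α : ℝ) (hP₁ : ∀ a, P₁ a ≠ ⊤) (hP₂ : ∀ b, P₂ b ≠ ⊤) (hM : ∀ a, M a ≠ ⊤)
    (hC : ∀ a b, C a b ≠ ⊤) :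
    hellingerSum α (fun p : A × B => P₁ p.1 * P₂ p.2) (fun p => M p.1 * C p.1 p.2) =
      ∑ a, P₁ a ^ α * M a ^ (1 - α) * hellingerSum α P₂ (C a) := by
  rw [hellingerSum, Fintype.sum_prod_type]
  refine sum_congr rfl fun a _ => ?_
  rw [hellingerSum, mul_sum]
  refine sum_congr rfl fun b _ => ?_
  rw [ENNReal.mul_rpow_of_ne_top (hP₁ a) (hP₂ b), ENNReal.mul_rpow_of_ne_top (hM a) (hC a b)]
  ring

theorem sum_klTerm_mul (hP₂ : ∑ b, (P₂ b).toReal = 1) (hM : ∀ a, M a ≠ ⊤) (hC : ∀ a b, C a b ≠ ⊤)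
    (hac : ∀ p : A × B, M p.1 * C p.1 p.2 = 0 → P₁ p.1 * P₂ p.2 = 0) :
    ∑ p : A × B, klTerm (P₁ p.1 * P₂ p.2) (M p.1 * C p.1 p.2) =
      ∑ a, klTerm (P₁ a) (M a) + ∑ a, (P₁ a).toReal * ∑ b, klTerm (P₂ b) (C a b) := by
  rw [Fintype.sum_prod_type, ← sum_add_distrib]
  refine sum_congr rfl fun a _ => ?_
  simp only [klTerm_mul (ENNReal.mul_ne_top (hM a) (hC a _)) (mt (hac (a, _))), sum_add_distrib,
    ← sum_mul, hP₂, one_mul, mul_sum]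

end ChainRule

section ChainBound

variable {A B : Type*} [Fintype A] [Fintype B] {P₁ M : A → ℝ≥0∞} {P₂ : B → ℝ≥0∞}
  {C : A → B → ℝ≥0∞}

theorem exists_coe_mul_log_mul_le [Nonempty A] (c : ℝ) (w s : A → ℝ≥0∞) :
    ∃ a, (c : EReal) * ENNReal.log ((∑ a', w a') * s a) ≤
      c * ENNReal.log (∑ a', w a' * s a') := by
  rcases le_total 0 c with hc | hc
  · obtain ⟨a, -, ha⟩ := exists_min_image univ s univ_nonempty
    refine ⟨a, mul_le_mul_of_nonneg_left (ENNReal.log_le_log ?_) (EReal.coe_nonneg.mpr hc)⟩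
    rw [sum_mul]
    exact sum_le_sum fun a' _ => mul_le_mul_right (ha a' (mem_univ a')) _
  · obtain ⟨a, -, ha⟩ := exists_max_image univ s univ_nonempty
    refine ⟨a, ?_⟩
    rw [mul_comm (c : EReal), mul_comm (c : EReal)]
    refine EReal.mul_le_mul_of_nonpos_right (ENNReal.log_le_log ?_) (EReal.coe_nonpos.mpr hc)
    rw [sum_mul]
    exact sum_le_sum fun a' _ => mul_le_mul_right (ha a' (mem_univ a')) _

theorem exists_add_le_renyiDiv_mul_of_ne_one {α : ℝ} (hα : α ≠ 1) (hP₁ : ∑ a, P₁ a = 1)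
    (hP₂ : ∑ b, P₂ b = 1) (hM : ∀ a, M a ≠ ⊤) (hC : ∀ a b, C a b ≠ ⊤) :
    ∃ a, renyiDiv α P₁ M + renyiDiv α P₂ (C a) ≤
      renyiDiv α (fun p : A × B => P₁ p.1 * P₂ p.2) (fun p => M p.1 * C p.1 p.2) := by
  obtain ⟨a₀, -⟩ := exists_ne_zero_of_sum_eq_one hP₁
  have : Nonempty A := ⟨a₀⟩
  obtain ⟨a, ha⟩ := exists_coe_mul_log_mul_le (α - 1)⁻¹ (fun a => P₁ a ^ α * M a ^ (1 - α))
    (fun a => hellingerSum α P₂ (C a))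
  refine ⟨a, ?_⟩
  rw [renyiDiv_of_ne_one hα, renyiDiv_of_ne_one hα, renyiDiv_of_ne_one hα,
    hellingerSum_mul α (ne_top_of_sum_eq_one hP₁) (ne_top_of_sum_eq_one hP₂) hM hC]
  refine (EReal.coe_mul_add_le _ _ _).trans ?_
  rw [← ENNReal.log_mul_add]
  exact ha

theorem exists_add_le_klDiv_mul (hP₁ : ∑ a, P₁ a = 1) (hP₂ : ∑ b, P₂ b = 1) (hM : ∀ a, M a ≠ ⊤)
    (hC : ∀ a b, C a b ≠ ⊤) :
    ∃ a, klDiv P₁ M + klDiv P₂ (C a) ≤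
      klDiv (fun p : A × B => P₁ p.1 * P₂ p.2) (fun p => M p.1 * C p.1 p.2) := by
  by_cases hac : ∀ p : A × B, M p.1 * C p.1 p.2 = 0 → P₁ p.1 * P₂ p.2 = 0
  swap
  · obtain ⟨a, -⟩ := exists_ne_zero_of_sum_eq_one hP₁
    exact ⟨a, by rw [klDiv_of_not_ac hac]; exact le_top⟩
  obtain ⟨b₀, hb₀⟩ := exists_ne_zero_of_sum_eq_one hP₂
  have hac₁ : ∀ a, M a = 0 → P₁ a = 0 := fun a ha =>
    (mul_eq_zero.mp (hac (a, b₀) (by simp [ha]))).resolve_right hb₀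
  obtain ⟨a, ha, hmin⟩ := exists_ne_zero_le_sum_mul (fun _ => ENNReal.toReal_nonneg)
    (sum_toReal_of_sum_eq_one hP₁) fun a => ∑ b, klTerm (P₂ b) (C a b)
  have hac₂ : ∀ b, C a b = 0 → P₂ b = 0 := fun b hb =>
    (mul_eq_zero.mp (hac (a, b) (by simp [hb]))).resolve_left (ENNReal.toReal_ne_zero.mp ha).1
  refine ⟨a, ?_⟩
  rw [klDiv_of_ac hac₁, klDiv_of_ac hac₂, klDiv_of_ac hac,
    sum_klTerm_mul (sum_toReal_of_sum_eq_one hP₂) hM hC hac, ← EReal.coe_add]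
  exact EReal.coe_le_coe_iff.mpr (add_le_add_right hmin _)

theorem exists_add_le_renyiDiv_mul (α : ℝ) (hP₁ : ∑ a, P₁ a = 1) (hP₂ : ∑ b, P₂ b = 1)
    (hM : ∀ a, M a ≠ ⊤) (hC : ∀ a b, C a b ≠ ⊤) :
    ∃ a, renyiDiv α P₁ M + renyiDiv α P₂ (C a) ≤
      renyiDiv α (fun p : A × B => P₁ p.1 * P₂ p.2) (fun p => M p.1 * C p.1 p.2) := by
  rcases eq_or_ne α 1 with rfl | hα
  · simpa only [renyiDiv_one] using exists_add_le_klDiv_mul hP₁ hP₂ hM hC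
  · exact exists_add_le_renyiDiv_mul_of_ne_one hα hP₁ hP₂ hM hC

end ChainBound

section Product

variable {A B : Type*} [Fintype A] [Fintype B] {P₁ Q₁ : A → ℝ≥0∞} {P₂ Q₂ : B → ℝ≥0∞}

theorem klDiv_prod_le (hP₁ : ∑ a, P₁ a = 1) (hP₂ : ∑ b, P₂ b = 1) (hQ₁ : ∀ a, Q₁ a ≠ ⊤)
    (hQ₂ : ∀ b, Q₂ b ≠ ⊤) :
    klDiv (fun p : A × B => P₁ p.1 * P₂ p.2) (fun p => Q₁ p.1 * Q₂ p.2) ≤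
      klDiv P₁ Q₁ + klDiv P₂ Q₂ := by
  by_cases h₁ : ∀ a, Q₁ a = 0 → P₁ a = 0
  swap
  · rw [klDiv_of_not_ac h₁, EReal.top_add_of_ne_bot (klDiv_ne_bot _ _)]
    exact le_top
  by_cases h₂ : ∀ b, Q₂ b = 0 → P₂ b = 0
  swap
  · rw [klDiv_of_not_ac h₂, EReal.add_top_of_ne_bot (klDiv_ne_bot _ _)]
    exact le_top
  have hac : ∀ p : A × B, Q₁ p.1 * Q₂ p.2 = 0 → P₁ p.1 * P₂ p.2 = 0 := fun p hp => by
    rcases mul_eq_zero.mp hp with h | h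
    · simp [h₁ _ h]
    · simp [h₂ _ h]
  rw [klDiv_of_ac h₁, klDiv_of_ac h₂, klDiv_of_ac hac,
    sum_klTerm_mul (C := fun _ => Q₂) (sum_toReal_of_sum_eq_one hP₂) hQ₁ (fun _ => hQ₂) hac,
    ← sum_mul, sum_toReal_of_sum_eq_one hP₁, one_mul, EReal.coe_add]

theorem renyiDiv_prod_le_of_ne_one {α : ℝ} (hα₀ : 0 ≤ α) (hα : α ≠ 1) (hP₁ : ∀ a, P₁ a ≠ ⊤)
    (hP₂ : ∀ b, P₂ b ≠ ⊤) (hQ₁ : ∀ a, Q₁ a ≠ ⊤) (hQ₂ : ∀ b, Q₂ b ≠ ⊤) :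
    renyiDiv α (fun p : A × B => P₁ p.1 * P₂ p.2) (fun p => Q₁ p.1 * Q₂ p.2) ≤
      renyiDiv α P₁ Q₁ + renyiDiv α P₂ Q₂ := by
  have hH : hellingerSum α (fun p : A × B => P₁ p.1 * P₂ p.2) (fun p => Q₁ p.1 * Q₂ p.2) =
      hellingerSum α P₁ Q₁ * hellingerSum α P₂ Q₂ := by
    rw [hellingerSum_mul (C := fun _ => Q₂) α hP₁ hP₂ hQ₁ fun _ => hQ₂, ← sum_mul]
    rfl
  rw [renyiDiv_of_ne_one hα, renyiDiv_of_ne_one hα, renyiDiv_of_ne_one hα, hH,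
    ENNReal.log_mul_add]
  rcases hα.lt_or_gt with h | h
  · refine (EReal.coe_mul_add_of_ne_top _ ?_ ?_).le <;> rw [ne_eq, ENNReal.log_eq_top_iff]
    · exact hellingerSum_ne_top hα₀ h.le hP₁ hQ₁
    · exact hellingerSum_ne_top hα₀ h.le hP₂ hQ₂
  · exact (EReal.left_distrib_of_nonneg_of_ne_top
      (EReal.coe_nonneg.mpr (inv_nonneg.mpr (sub_nonneg.mpr h.le))) (EReal.coe_ne_top _) _ _).le

theorem renyiDiv_prod_le {α : ℝ} (hα : 0 ≤ α) (hP₁ : ∑ a, P₁ a = 1) (hP₂ : ∑ b, P₂ b = 1)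
    (hQ₁ : ∀ a, Q₁ a ≠ ⊤) (hQ₂ : ∀ b, Q₂ b ≠ ⊤) :
    renyiDiv α (fun p : A × B => P₁ p.1 * P₂ p.2) (fun p => Q₁ p.1 * Q₂ p.2) ≤
      renyiDiv α P₁ Q₁ + renyiDiv α P₂ Q₂ := by
  rcases eq_or_ne α 1 with rfl | hα₁
  · simpa only [renyiDiv_one] using klDiv_prod_le hP₁ hP₂ hQ₁ hQ₂
  · exact renyiDiv_prod_le_of_ne_one hα hα₁ (ne_top_of_sum_eq_one hP₁)
      (ne_top_of_sum_eq_one hP₂) hQ₁ hQ₂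

end Product

theorem renyiDiv_ne_top {T : Type*} [Fintype T] {α : ℝ} (hα : 0 < α) {P Q : T → ℝ≥0∞}
    (hP : ∑ x, P x = 1) (hQ : ∀ x, Q x ≠ ⊤) (hac : ∀ x, Q x = 0 → P x = 0) :
    renyiDiv α P Q ≠ ⊤ := by
  rcases eq_or_ne α 1 with rfl | hα₁
  · rw [renyiDiv_one, klDiv_of_ac hac]
    exact EReal.coe_ne_top _
  rw [renyiDiv_of_ne_one hα₁, ne_eq, EReal.mul_eq_top]
  rcases hα₁.lt_or_gt with h | h
  · obtain ⟨x, hx⟩ := exists_ne_zero_of_sum_eq_one hP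
    have hH : hellingerSum α P Q ≠ 0 := fun hH => by
      have := (sum_eq_zero_iff.mp hH) x (mem_univ x)
      simp [ENNReal.rpow_eq_zero_iff, hx, ne_top_of_sum_eq_one hP x, hQ x, mt (hac x) hx] at this
    simp [hH, hellingerSum_ne_top hα.le h.le (ne_top_of_sum_eq_one hP) hQ]
  · have hH : hellingerSum α P Q ≠ ⊤ := ENNReal.sum_ne_top.mpr fun x _ => by
      by_cases hx : P x = 0
      · simp [hx, ENNReal.zero_rpow_of_pos hα]
      · exact ENNReal.mul_ne_top (ENNReal.rpow_ne_top_of_nonneg hα.le (ne_top_of_sum_eq_one hP x))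
          (by simp [ENNReal.rpow_eq_top_iff, hQ x, mt (hac x) hx])
    simp [hH, h.le]

section Jalpha

variable {X Y : Type*} [Fintype X] [Fintype Y]

theorem Jalpha_le (α : ℝ) (P : X × Y → ℝ≥0∞) {Q₁ : X → ℝ≥0∞} {Q₂ : Y → ℝ≥0∞}
    (h₁ : ∑ x, Q₁ x = 1) (h₂ : ∑ y, Q₂ y = 1) :
    Jalpha α P ≤ renyiDiv α P (fun p => Q₁ p.1 * Q₂ p.2) :=
  iInf_le (fun Q : PMFon X × PMFon Y => renyiDiv α P fun p => Q.1.1 p.1 * Q.2.1 p.2)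
    (⟨Q₁, h₁⟩, ⟨Q₂, h₂⟩)

theorem Jalpha_ne_top {α : ℝ} (hα : 0 < α) {P : X × Y → ℝ≥0∞} (hP : ∑ p, P p = 1) :
    Jalpha α P ≠ ⊤ := by
  have hX : ∑ x, margX P x = 1 := (sum_margX P).trans hP
  have hY : ∑ y, margY P y = 1 := (sum_margY P).trans hP
  refine ne_top_of_le_ne_top (renyiDiv_ne_top hα hP (fun p => ?_)
    fun p => eq_zero_of_margX_mul_margY_eq_zero) (Jalpha_le α P hX hY)
  exact ENNReal.mul_ne_top (ne_top_of_sum_eq_one hX _) (ne_top_of_sum_eq_one hY _)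

variable {X₁ X₂ Y₁ Y₂ : Type*} [Fintype X₁] [Fintype X₂] [Fintype Y₁] [Fintype Y₂]

theorem renyiDiv_indep (α : ℝ) (P₁ : X₁ × Y₁ → ℝ≥0∞) (P₂ : X₂ × Y₂ → ℝ≥0∞)
    (QX : X₁ × X₂ → ℝ≥0∞) (QY : Y₁ × Y₂ → ℝ≥0∞) :
    renyiDiv α (fun q : (X₁ × X₂) × (Y₁ × Y₂) => P₁ (q.1.1, q.2.1) * P₂ (q.1.2, q.2.2))
        (fun q => QX q.1 * QY q.2) =
      renyiDiv α (fun p : (X₁ × Y₁) × (X₂ × Y₂) => P₁ p.1 * P₂ p.2)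
        (fun p => QX (p.1.1, p.2.1) * QY (p.1.2, p.2.2)) :=
  (renyiDiv_comp_equiv α (Equiv.prodProdProdComm X₁ Y₁ X₂ Y₂) _ _).symm

variable {P₁ : X₁ × Y₁ → ℝ≥0∞} {P₂ : X₂ × Y₂ → ℝ≥0∞}

theorem Jalpha_indep_le {α : ℝ} (hα : 0 < α) (hP₁ : ∑ p, P₁ p = 1) (hP₂ : ∑ p, P₂ p = 1) :
    Jalpha α (fun q : (X₁ × X₂) × (Y₁ × Y₂) => P₁ (q.1.1, q.2.1) * P₂ (q.1.2, q.2.2)) ≤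
      Jalpha α P₁ + Jalpha α P₂ := by
  refine EReal.le_iInf_add_iInf (Jalpha_ne_top hα hP₁) (Jalpha_ne_top hα hP₂) fun Q₁ Q₂ => ?_
  calc _ ≤ _ := Jalpha_le α _ (sum_mul_eq_one Q₁.1.2 Q₂.1.2) (sum_mul_eq_one Q₁.2.2 Q₂.2.2)
    _ = _ := renyiDiv_indep α P₁ P₂ (fun x => Q₁.1.1 x.1 * Q₂.1.1 x.2)
          (fun y => Q₁.2.1 y.1 * Q₂.2.1 y.2)
    _ ≤ _ := by
      convert renyiDiv_prod_le hα.le hP₁ hP₂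
        (fun p => ENNReal.mul_ne_top (ne_top_of_sum_eq_one Q₁.1.2 p.1)
          (ne_top_of_sum_eq_one Q₁.2.2 p.2))
        (fun p => ENNReal.mul_ne_top (ne_top_of_sum_eq_one Q₂.1.2 p.1)
          (ne_top_of_sum_eq_one Q₂.2.2 p.2)) using 2
      funext p
      exact mul_mul_mul_comm _ _ _ _

theorem add_Jalpha_le_renyiDiv_indep (α : ℝ) (hP₁ : ∑ p, P₁ p = 1) (hP₂ : ∑ p, P₂ p = 1)
    {QX : X₁ × X₂ → ℝ≥0∞} {QY : Y₁ × Y₂ → ℝ≥0∞} (hQX : ∑ p, QX p = 1) (hQY : ∑ p, QY p = 1) :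
    Jalpha α P₁ + Jalpha α P₂ ≤
      renyiDiv α (fun q : (X₁ × X₂) × (Y₁ × Y₂) => P₁ (q.1.1, q.2.1) * P₂ (q.1.2, q.2.2))
        (fun q => QX q.1 * QY q.2) := by
  have hmX : ∑ x, margX QX x = 1 := (sum_margX QX).trans hQX
  have hmY : ∑ y, margX QY y = 1 := (sum_margX QY).trans hQY
  have hfactor : (fun p : (X₁ × Y₁) × (X₂ × Y₂) => QX (p.1.1, p.2.1) * QY (p.1.2, p.2.2)) =
      fun p => margX QX p.1.1 * margX QY p.1.2 *
        (condFst QX p.1.1 p.2.1 * condFst QY p.1.2 p.2.2) := by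
    funext p
    rw [← margX_mul_condFst hQX, ← margX_mul_condFst hQY]
    ring
  obtain ⟨a, ha⟩ := exists_add_le_renyiDiv_mul α hP₁ hP₂
    (fun a => ENNReal.mul_ne_top (ne_top_of_sum_eq_one hmX _) (ne_top_of_sum_eq_one hmY _))
    (fun a b => ENNReal.mul_ne_top (ne_top_of_sum_eq_one (sum_condFst hQX a.1) _)
      (ne_top_of_sum_eq_one (sum_condFst hQY a.2) _))
  rw [renyiDiv_indep, hfactor]
  exact le_trans (add_le_add (Jalpha_le α P₁ hmX hmY)
    (Jalpha_le α P₂ (sum_condFst hQX a.1) (sum_condFst hQY a.2))) ha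

theorem le_Jalpha_indep (α : ℝ) (hP₁ : ∑ p, P₁ p = 1) (hP₂ : ∑ p, P₂ p = 1) :
    Jalpha α P₁ + Jalpha α P₂ ≤
      Jalpha α (fun q : (X₁ × X₂) × (Y₁ × Y₂) => P₁ (q.1.1, q.2.1) * P₂ (q.1.2, q.2.2)) :=
  le_iInf fun Q => add_Jalpha_le_renyiDiv_indep α hP₁ hP₂ Q.1.2 Q.2.2

end Jalpha

/-- additivity of `J_α` for independent pairs. -/
theorem stmt5 {X1 X2 Y1 Y2 : Type*} [Fintype X1] [Fintype X2] [Fintype Y1] [Fintype Y2]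
    (P1 : X1 × Y1 → ℝ≥0∞) (hP1 : ∑ p, P1 p = 1)
    (P2 : X2 × Y2 → ℝ≥0∞) (hP2 : ∑ p, P2 p = 1) (α : ℝ) (hα : 0 < α) :
    Jalpha α (fun q : (X1 × X2) × (Y1 × Y2) => P1 (q.1.1, q.2.1) * P2 (q.1.2, q.2.2)) =
      Jalpha α P1 + Jalpha α P2 :=
  le_antisymm (Jalpha_indep_le hα hP1 hP2) (le_Jalpha_indep α hP1 hP2)
end

section
/- For every δ ∈ (0, 1/4) and any PMFs Q_X, Q_Y, one has 2^{−δ D_{1−δ}(P_XY||Q_X Q_Y)} ≤ ( Σ_{x,y} P(x,y) [P_X(x)P_Y(y)/P(x,y)]^{2δ} )^{1/2}, and consequently J_{1−δ}(X;Y) ≥ −(1/(2δ)) log Σ_{x,y} P(x,y) [P_X(x)P_Y(y)/P(x,y)]^{2δ}. -/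
open scoped ENNReal BigOperators
open Finset

/-! Write `M = P_X P_Y` and `Q = Q_X Q_Y`. On the support of `P` one has
`P^{1-δ} Q^δ = P (M/P)^δ (Q/M)^δ`, so Cauchy–Schwarz with weight `P` bounds
`∑ P^{1-δ} Q^δ = 2^{-δ D_{1-δ}(P‖Q)}` by `S^{1/2} U^{1/2}`, where `S = ∑ P (M/P)^{2δ}` and
`U = ∑ P (Q/M)^{2δ}`.
Since `Q/M = (Q_X/P_X)(Q_Y/P_Y)`, a second Cauchy–Schwarz bounds `U` by the geometric mean of
`∑ P_X (Q_X/P_X)^{4δ} = ∑ P_X^{1-4δ} Q_X^{4δ}` and its `Y`-analogue, and both are `≤ 1` by Hölder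
(the nonnegativity of `D_{1-4δ}`), which is where `δ < 1/4` enters. -/

namespace ENNReal

theorem mul_div_rpow_eq_rpow_mul_rpow {a : ℝ≥0∞} (b : ℝ≥0∞) (ha : a ≠ ⊤) {c : ℝ}
    (hc₀ : 0 ≤ c) (hc₁ : c < 1) : a * (b / a) ^ c = a ^ (1 - c) * b ^ c := by
  rcases eq_or_ne a 0 with rfl | ha₀
  · simp [zero_rpow_of_pos (sub_pos.2 hc₁)]
  · rw [div_rpow_of_nonneg _ _ hc₀, rpow_sub _ _ ha₀ ha, rpow_one, div_eq_mul_inv,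
      div_eq_mul_inv]
    ring

theorem sum_mul_mul_le_sqrt_mul_sqrt {ι : Type*} (s : Finset ι) (w f g : ι → ℝ≥0∞) :
    ∑ i ∈ s, w i * f i * g i
      ≤ (∑ i ∈ s, w i * f i ^ 2) ^ (1 / 2 : ℝ) * (∑ i ∈ s, w i * g i ^ 2) ^ (1 / 2 : ℝ) := by
  have hsq : ∀ i (h : ι → ℝ≥0∞), (w i ^ (1 / 2 : ℝ) * h i) ^ (2 : ℝ) = w i * h i ^ 2 := by
    intro i h
    rw [mul_rpow_of_nonneg _ _ zero_le_two, ← rpow_mul, rpow_ofNat]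
    norm_num
  have hsplit : ∀ i, w i * f i * g i = (w i ^ (1 / 2 : ℝ) * f i) * (w i ^ (1 / 2 : ℝ) * g i) := by
    intro i
    rw [mul_mul_mul_comm, ← rpow_add_of_nonneg _ _ (by norm_num) (by norm_num), add_halves,
      rpow_one, mul_assoc]
  simpa only [hsplit, hsq, one_div_one_div] using
    inner_le_Lp_mul_Lq s (fun i => w i ^ (1 / 2 : ℝ) * f i) (fun i => w i ^ (1 / 2 : ℝ) * g i)
      Real.HolderConjugate.two_two

theorem sum_rpow_one_sub_mul_rpow_le_one {ι : Type*} (s : Finset ι) {p q : ι → ℝ≥0∞}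
    (hp : ∑ i ∈ s, p i ≤ 1) (hq : ∑ i ∈ s, q i ≤ 1) {c : ℝ} (hc₀ : 0 < c) (hc₁ : c < 1) :
    ∑ i ∈ s, p i ^ (1 - c) * q i ^ c ≤ 1 := by
  have hinv : ∀ (a : ℝ≥0∞) {e : ℝ}, e ≠ 0 → (a ^ e) ^ e⁻¹ = a := fun a e he => by
    rw [← rpow_mul, mul_inv_cancel₀ he, rpow_one]
  calc ∑ i ∈ s, p i ^ (1 - c) * q i ^ c
      ≤ (∑ i ∈ s, (p i ^ (1 - c)) ^ (1 - c)⁻¹) ^ (1 / (1 - c)⁻¹)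
          * (∑ i ∈ s, (q i ^ c) ^ c⁻¹) ^ (1 / c⁻¹) :=
        inner_le_Lp_mul_Lq s _ _ (Real.HolderConjugate.one_sub_inv_inv hc₀ hc₁)
    _ ≤ 1 ^ (1 / (1 - c)⁻¹) * 1 ^ (1 / c⁻¹) := by
        simp only [hinv _ (sub_pos.2 hc₁).ne', hinv _ hc₀.ne']
        gcongr
    _ = 1 := by simp

theorem sum_mul_div_rpow_le_one {ι : Type*} (s : Finset ι) {p q : ι → ℝ≥0∞}
    (hp : ∑ i ∈ s, p i ≤ 1) (hq : ∑ i ∈ s, q i ≤ 1) {c : ℝ} (hc₀ : 0 < c) (hc₁ : c < 1) :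
    ∑ i ∈ s, p i * (q i / p i) ^ c ≤ 1 := by
  have hp_ne_top : ∀ i ∈ s, p i ≠ ⊤ := sum_ne_top.1 (ne_top_of_le_ne_top one_ne_top hp)
  rw [sum_congr rfl fun i hi => mul_div_rpow_eq_rpow_mul_rpow _ (hp_ne_top i hi) hc₀.le hc₁]
  exact sum_rpow_one_sub_mul_rpow_le_one s hp hq hc₀ hc₁

end ENNReal

section Marginals

variable {X Y : Type*} [Fintype X] [Fintype Y] (P : X × Y → ℝ≥0∞)

theorem le_margX_s8 (p : X × Y) : P p ≤ margX P p.1 :=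
  single_le_sum (f := fun y => P (p.1, y)) (fun _ _ => zero_le) (mem_univ p.2)

theorem le_margY_s8 (p : X × Y) : P p ≤ margY P p.2 :=
  single_le_sum (f := fun x => P (x, p.2)) (fun _ _ => zero_le) (mem_univ p.1)

theorem sum_mul_margX (f : X → ℝ≥0∞) : ∑ p, P p * f p.1 = ∑ x, margX P x * f x := by
  simp only [Fintype.sum_prod_type, margX, sum_mul]

theorem sum_mul_margY (f : Y → ℝ≥0∞) : ∑ p, P p * f p.2 = ∑ y, margY P y * f y := by
  simp only [Fintype.sum_prod_type_right, margY, sum_mul]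

theorem sum_margX_s8 : ∑ x, margX P x = ∑ p, P p := by
  simpa using (sum_mul_margX P 1).symm

theorem sum_margY_s8 : ∑ y, margY P y = ∑ p, P p := by
  simpa using (sum_mul_margY P 1).symm

theorem sum_margX_mul_margY : ∑ p : X × Y, margX P p.1 * margY P p.2 = (∑ p, P p) ^ 2 := by
  rw [Fintype.sum_prod_type, ← Fintype.sum_mul_sum, sum_margX_s8, sum_margY_s8, sq]

end Marginals

open ENNReal

section Dependence

variable {X Y : Type*} [Fintype X] [Fintype Y] {P : X × Y → ℝ≥0∞}

theorem sum_mul_div_margX_rpow_le_one (hP : ∑ p, P p = 1) {QX : X → ℝ≥0∞}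
    (hQX : ∑ x, QX x ≤ 1) {c : ℝ} (hc₀ : 0 < c) (hc₁ : c < 1) :
    ∑ p, P p * (QX p.1 / margX P p.1) ^ c ≤ 1 := by
  rw [sum_mul_margX P fun x => (QX x / margX P x) ^ c]
  exact sum_mul_div_rpow_le_one _ (by rw [sum_margX_s8, hP]) hQX hc₀ hc₁

theorem sum_mul_div_margY_rpow_le_one (hP : ∑ p, P p = 1) {QY : Y → ℝ≥0∞}
    (hQY : ∑ y, QY y ≤ 1) {c : ℝ} (hc₀ : 0 < c) (hc₁ : c < 1) :
    ∑ p, P p * (QY p.2 / margY P p.2) ^ c ≤ 1 := by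
  rw [sum_mul_margY P fun y => (QY y / margY P y) ^ c]
  exact sum_mul_div_rpow_le_one _ (by rw [sum_margY_s8, hP]) hQY hc₀ hc₁

theorem sum_mul_div_margX_mul_margY_rpow_le_one (hP : ∑ p, P p = 1) {QX : X → ℝ≥0∞}
    {QY : Y → ℝ≥0∞} (hQX : ∑ x, QX x ≤ 1) (hQY : ∑ y, QY y ≤ 1) {c : ℝ} (hc₀ : 0 < c)
    (hc₁ : 2 * c < 1) :
    ∑ p, P p * ((QX p.1 * QY p.2) / (margX P p.1 * margY P p.2)) ^ c ≤ 1 := by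
  have hsplit : ∀ p, P p * ((QX p.1 * QY p.2) / (margX P p.1 * margY P p.2)) ^ c
      = P p * (QX p.1 / margX P p.1) ^ c * (QY p.2 / margY P p.2) ^ c := by
    intro p
    rcases eq_or_ne (P p) 0 with hp | hp
    · simp [hp]
    have hX : margX P p.1 ≠ 0 := ((pos_iff_ne_zero.2 hp).trans_le (le_margX_s8 P p)).ne'
    have hY : margY P p.2 ≠ 0 := ((pos_iff_ne_zero.2 hp).trans_le (le_margY_s8 P p)).ne'
    rw [mul_assoc, ← mul_rpow_of_nonneg _ _ hc₀.le,
      ENNReal.mul_div_mul_comm (Or.inl hX) (Or.inr hY)]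
  calc ∑ p, P p * ((QX p.1 * QY p.2) / (margX P p.1 * margY P p.2)) ^ c
      = ∑ p, P p * (QX p.1 / margX P p.1) ^ c * (QY p.2 / margY P p.2) ^ c :=
        sum_congr rfl fun p _ => hsplit p
    _ ≤ (∑ p, P p * ((QX p.1 / margX P p.1) ^ c) ^ 2) ^ (1 / 2 : ℝ)
          * (∑ p, P p * ((QY p.2 / margY P p.2) ^ c) ^ 2) ^ (1 / 2 : ℝ) :=
        sum_mul_mul_le_sqrt_mul_sqrt _ _ _ _
    _ ≤ 1 ^ (1 / 2 : ℝ) * 1 ^ (1 / 2 : ℝ) := by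
        simp only [← rpow_mul_natCast, Nat.cast_ofNat, mul_comm c]
        gcongr
        · exact sum_mul_div_margX_rpow_le_one hP hQX (by positivity) hc₁
        · exact sum_mul_div_margY_rpow_le_one hP hQY (by positivity) hc₁
    _ = 1 := by simp

theorem sum_rpow_one_sub_mul_rpow_le_sqrt (hP : ∑ p, P p = 1) {QX : X → ℝ≥0∞}
    {QY : Y → ℝ≥0∞} (hQX : ∑ x, QX x ≤ 1) (hQY : ∑ y, QY y ≤ 1) {δ : ℝ} (hδ₀ : 0 < δ)
    (hδ₁ : δ < 1 / 4) :
    ∑ p, P p ^ (1 - δ) * (QX p.1 * QY p.2) ^ δ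
      ≤ (∑ p, P p * ((margX P p.1 * margY P p.2) / P p) ^ (2 * δ)) ^ (1 / 2 : ℝ) := by
  set M : X × Y → ℝ≥0∞ := fun p => margX P p.1 * margY P p.2
  set Q : X × Y → ℝ≥0∞ := fun p => QX p.1 * QY p.2
  have hM_ne_top : ∀ p, M p ≠ ⊤ := fun p =>
    sum_ne_top.1 (by rw [sum_margX_mul_margY, hP, one_pow]; exact one_ne_top) p (mem_univ p)
  have hsplit : ∀ p, P p ^ (1 - δ) * Q p ^ δ = P p * (M p / P p) ^ δ * (Q p / M p) ^ δ := by
    intro p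
    rcases eq_or_ne (P p) 0 with hp | hp
    · simp [hp, zero_rpow_of_pos (by linarith : 0 < 1 - δ)]
    have hM_ne_zero : M p ≠ 0 := mul_ne_zero
      ((pos_iff_ne_zero.2 hp).trans_le (le_margX_s8 P p)).ne'
      ((pos_iff_ne_zero.2 hp).trans_le (le_margY_s8 P p)).ne'
    rw [mul_div_rpow_eq_rpow_mul_rpow _ (sum_ne_top.1 (hP ▸ one_ne_top) p (mem_univ p))
      hδ₀.le (by linarith), mul_assoc, ← mul_rpow_of_nonneg _ _ hδ₀.le,
      ENNReal.mul_div_cancel hM_ne_zero (hM_ne_top p)]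
  calc ∑ p, P p ^ (1 - δ) * Q p ^ δ
      = ∑ p, P p * (M p / P p) ^ δ * (Q p / M p) ^ δ := sum_congr rfl fun p _ => hsplit p
    _ ≤ (∑ p, P p * ((M p / P p) ^ δ) ^ 2) ^ (1 / 2 : ℝ)
          * (∑ p, P p * ((Q p / M p) ^ δ) ^ 2) ^ (1 / 2 : ℝ) :=
        sum_mul_mul_le_sqrt_mul_sqrt _ _ _ _
    _ ≤ (∑ p, P p * (M p / P p) ^ (2 * δ)) ^ (1 / 2 : ℝ) * 1 ^ (1 / 2 : ℝ) := by
        simp only [← rpow_mul_natCast, Nat.cast_ofNat, mul_comm δ]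
        gcongr
        exact sum_mul_div_margX_mul_margY_rpow_le_one hP hQX hQY (by positivity) (by linarith)
    _ = (∑ p, P p * (M p / P p) ^ (2 * δ)) ^ (1 / 2 : ℝ) := by simp

end Dependence

theorem le_renyiDiv_one_sub_of_sum_le_sqrt {Z : Type*} [Fintype Z] {P Q : Z → ℝ≥0∞}
    {S : ℝ≥0∞} (hS : S ≠ ⊤) {δ : ℝ} (hδ : 0 < δ)
    (h : ∑ z, P z ^ (1 - δ) * Q z ^ δ ≤ S ^ (1 / 2 : ℝ)) :
    ((-(1 / (2 * δ)) * Real.log S.toReal : ℝ) : EReal) ≤ renyiDiv (1 - δ) P Q := by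
  rw [renyiDiv, if_neg (by linarith), _root_.sub_sub_cancel, sub_sub_cancel_left, inv_neg]
  set T := ∑ z, P z ^ (1 - δ) * Q z ^ δ
  rcases eq_or_ne T 0 with hT | hT
  · rw [hT, log_zero, EReal.coe_mul_bot_of_neg (by simpa using hδ)]
    exact le_top
  have hT_ne_top : T ≠ ⊤ := ne_top_of_le_ne_top (rpow_ne_top_of_nonneg (by norm_num) hS) h
  have hT_pos : 0 < T.toReal := toReal_pos hT hT_ne_top
  have hT_le : T.toReal ≤ S.toReal ^ (1 / 2 : ℝ) := by
    rw [toReal_rpow]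
    exact toReal_mono (rpow_ne_top_of_nonneg (by norm_num) hS) h
  have hS_ne_zero : S ≠ 0 := by
    rintro rfl
    exact hT (le_zero_iff.1 (h.trans_eq (zero_rpow_of_pos (by norm_num))))
  have hS_pos : 0 < S.toReal := toReal_pos hS_ne_zero hS
  have hlog : Real.log T.toReal ≤ 1 / 2 * Real.log S.toReal := by
    rw [← Real.log_rpow hS_pos]
    exact Real.log_le_log hT_pos hT_le
  rw [log_pos_real hT hT_ne_top, ← EReal.coe_mul, EReal.coe_le_coe_iff]
  calc -(1 / (2 * δ)) * Real.log S.toReal = -δ⁻¹ * (1 / 2 * Real.log S.toReal) := by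
        field_simp
    _ ≤ -δ⁻¹ * Real.log T.toReal :=
        mul_le_mul_of_nonpos_left hlog (by simpa using hδ.le)

/-- for `δ ∈ (0, 1/4)`, `2^{-δ D_{1-δ}(P_XY‖Q_X Q_Y)} ≤ S^{1/2}` where
`S = ∑ P(x,y) (P_X(x)P_Y(y)/P(x,y))^{2δ}`; equivalently (taking `-(1/(2δ)) log₂` of
both sides) `D_{1-δ}(P_XY‖Q_X Q_Y) ≥ -(1/(2δ)) log S`, and consequently
`J_{1-δ}(X;Y) ≥ -(1/(2δ)) log S`. -/
theorem stmt8 {X Y : Type*} [Fintype X] [Fintype Y] (P : X × Y → ℝ≥0∞)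
    (hP : ∑ p, P p = 1) (δ : ℝ) (hδ0 : 0 < δ) (hδ : δ < 1/4) :
    (∀ (QX : X → ℝ≥0∞), ∑ x, QX x = 1 → ∀ (QY : Y → ℝ≥0∞), ∑ y, QY y = 1 →
      ((-(1/(2*δ)) *
          Real.log (∑ p, P p * ((margX P p.1 * margY P p.2) / P p) ^ (2*δ)).toReal
        : ℝ) : EReal)
        ≤ renyiDiv (1 - δ) P (fun p => QX p.1 * QY p.2)) ∧
    ((-(1/(2*δ)) *
        Real.log (∑ p, P p * ((margX P p.1 * margY P p.2) / P p) ^ (2*δ)).toReal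
      : ℝ) : EReal)
      ≤ Jalpha (1 - δ) P := by
  have hS : ∑ p, P p * ((margX P p.1 * margY P p.2) / P p) ^ (2 * δ) ≠ ⊤ :=
    ne_top_of_le_ne_top one_ne_top <| sum_mul_div_rpow_le_one _ hP.le
      (by rw [sum_margX_mul_margY, hP, one_pow]) (by positivity) (by linarith)
  have hD := fun (QX : X → ℝ≥0∞) (hQX : ∑ x, QX x = 1) (QY : Y → ℝ≥0∞) (hQY : ∑ y, QY y = 1) =>
    le_renyiDiv_one_sub_of_sum_le_sqrt hS hδ0
      (sum_rpow_one_sub_mul_rpow_le_sqrt hP hQX.le hQY.le hδ0 hδ)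
  exact ⟨hD, le_iInf fun Q => hD Q.1.1 Q.1.2 Q.2.1 Q.2.2⟩
end
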